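/- arXiv:2103.03310 — 2 statements merged into one kernel-verified Lean document; each statement's English description precedes it below -/
import Mathlib

section
/- Let K ∈ ℝ^{3×3} be symmetric positive definite and Γ: ℝ^{3×3} → ℝ^{3×3} satisfy ⟨Γ(R), R⟩_F > 0 for all R ≠ 0. Define V(R̃, q̃) := (1/2)⟨R̃, R̃⟩_F + (1/2) q̃ᵀ K⁻¹ q̃. Then along the error dynamics Ṙ̃ = [R J₀⁻¹ Rᵀ q̃]_× R − Γ(R̃), q̃̇ = −K R J₀⁻¹ Rᵀ vec(R̃ Rᵀ − R R̃ᵀ), with R ∈ SO(3) and J₀ symmetric positive definite, the derivative of V satisfies V̇ = −⟨R̃, Γ(R̃)⟩_F ≤ 0. -/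
open Matrix

noncomputable def hat (x : Fin 3 → ℝ) : Matrix (Fin 3) (Fin 3) ℝ :=
  !![0, -x 2, x 1; x 2, 0, -x 0; -x 1, x 0, 0]

noncomputable def vec3 (M : Matrix (Fin 3) (Fin 3) ℝ) : Fin 3 → ℝ :=
  ![M 2 1, M 0 2, M 1 0]

/-- Frobenius inner product on 3×3 real matrices. -/
noncomputable def frobInner (A B : Matrix (Fin 3) (Fin 3) ℝ) : ℝ :=
  Matrix.trace (Aᵀ * B)

lemma frob_hat (w : Fin 3 → ℝ) (R Rt : Matrix (Fin 3) (Fin 3) ℝ) :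
    frobInner Rt (hat w * R) = w ⬝ᵥ vec3 (Rt * Rᵀ - R * Rtᵀ) := by
  simp [frobInner, hat, vec3, Matrix.trace, Matrix.mul_apply, Matrix.diag,
    Fin.sum_univ_three, dotProduct, Matrix.vecMul]
  ring

/-- along the error dynamics, V̇ = −⟨R̃, Γ(R̃)⟩_F ≤ 0. -/
theorem Vdot_eq_neg (K J₀ : Matrix (Fin 3) (Fin 3) ℝ) (hK : K.PosDef) (hJ : J₀.PosDef)
    (Γ : Matrix (Fin 3) (Fin 3) ℝ → Matrix (Fin 3) (Fin 3) ℝ)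
    (hΓ : ∀ M : Matrix (Fin 3) (Fin 3) ℝ, M ≠ 0 → 0 < frobInner (Γ M) M)
    (R Rt : Matrix (Fin 3) (Fin 3) ℝ) (qt : Fin 3 → ℝ)
    (hR : Rᵀ * R = 1 ∧ R.det = 1) :
    frobInner Rt (hat ((R * J₀⁻¹ * Rᵀ) *ᵥ qt) * R - Γ Rt) +
      qt ⬝ᵥ (K⁻¹ *ᵥ (-(K *ᵥ ((R * J₀⁻¹ * Rᵀ) *ᵥ vec3 (Rt * Rᵀ - R * Rtᵀ))))) =
      -frobInner Rt (Γ Rt) ∧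
    frobInner Rt (hat ((R * J₀⁻¹ * Rᵀ) *ᵥ qt) * R - Γ Rt) +
      qt ⬝ᵥ (K⁻¹ *ᵥ (-(K *ᵥ ((R * J₀⁻¹ * Rᵀ) *ᵥ vec3 (Rt * Rᵀ - R * Rtᵀ))))) ≤ 0 := by
  set M := R * J₀⁻¹ * Rᵀ with hM
  set v := vec3 (Rt * Rᵀ - R * Rtᵀ) with hv
  have hMsym : Mᵀ = M := by
    rw [hM, Matrix.transpose_mul, Matrix.transpose_mul, Matrix.transpose_transpose,
      Matrix.transpose_nonsing_inv, show J₀ᵀ = J₀ from hJ.isHermitian, Matrix.mul_assoc]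
  have hKinv : K⁻¹ *ᵥ (-(K *ᵥ (M *ᵥ v))) = -(M *ᵥ v) := by
    rw [Matrix.mulVec_neg, Matrix.mulVec_mulVec,
      Matrix.nonsing_inv_mul K (isUnit_iff_ne_zero.mpr hK.det_pos.ne'), Matrix.one_mulVec]
  have hfrob : frobInner Rt (hat (M *ᵥ qt) * R - Γ Rt)
      = (M *ᵥ qt) ⬝ᵥ v - frobInner Rt (Γ Rt) := by
    rw [frobInner, Matrix.mul_sub, Matrix.trace_sub, ← frobInner, ← frobInner, frob_hat, hv]
  have hcomm : frobInner Rt (Γ Rt) = frobInner (Γ Rt) Rt := by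
    rw [frobInner, frobInner, ← Matrix.trace_transpose, Matrix.transpose_mul,
      Matrix.transpose_transpose]
  have hdot : qt ⬝ᵥ -(M *ᵥ v) = -((M *ᵥ qt) ⬝ᵥ v) := by
    rw [dotProduct_neg, Matrix.dotProduct_mulVec, ← Matrix.mulVec_transpose, hMsym]
  have key : frobInner Rt (hat (M *ᵥ qt) * R - Γ Rt) +
      qt ⬝ᵥ (K⁻¹ *ᵥ (-(K *ᵥ (M *ᵥ v)))) = -frobInner Rt (Γ Rt) := by
    rw [hKinv, hfrob, hdot]; ring
  refine ⟨key, ?_⟩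
  rw [key, hcomm]
  rcases eq_or_ne Rt 0 with h | h
  · simp [frobInner, h]
  · linarith [hΓ Rt h]
end

section
/- Let H ∈ ℝ^{2×2} with entries h_{ij} and suppose H is not both symmetric and trace-free (i.e., (h₁₁+h₂₂, h₁₂−h₂₁) ≠ (0,0)). Let s := √((h₁₁+h₂₂)² + (h₁₂−h₂₁)²), ϑ := (h₁₁+h₂₂)/s, ϝ := (h₁₂−h₂₁)/s. Then R* := [[ϑ, ϝ], [−ϝ, ϑ]] is the unique minimizer of |R − H|_F over R ∈ SO(2). -/
open Matrix

/-- Frobenius norm on 2×2 real matrices. -/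
noncomputable def frobNorm (A : Matrix (Fin 2) (Fin 2) ℝ) : ℝ :=
  Real.sqrt (Matrix.trace (Aᵀ * A))

lemma frob_sq (A : Matrix (Fin 2) (Fin 2) ℝ) :
    Matrix.trace (Aᵀ * A) = A 0 0^2 + A 0 1^2 + A 1 0^2 + A 1 1^2 := by
  simp [Matrix.trace, Matrix.mul_apply, Fin.sum_univ_succ]
  ring

lemma so2_aux (ϑ ϝ : ℝ) (hunit : ϑ ^ 2 + ϝ ^ 2 = 1) :
    (!![ϑ, ϝ; -ϝ, ϑ])ᵀ * !![ϑ, ϝ; -ϝ, ϑ] = 1 ∧ (!![ϑ, ϝ; -ϝ, ϑ]).det = 1 := by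
  constructor
  · ext i j
    fin_cases i <;> fin_cases j <;>
      simp [Matrix.mul_apply, Fin.sum_univ_succ, Matrix.one_apply] <;>
      nlinarith [hunit]
  · simp [Matrix.det_fin_two]
    nlinarith [hunit]

lemma cs_aux (a b p q s : ℝ) (hs : 0 < s) (hs_sq : s ^ 2 = p ^ 2 + q ^ 2)
    (hab : a ^ 2 + b ^ 2 = 1) : a * p + b * q ≤ s := by
  nlinarith [sq_nonneg (a * q - b * p), sq_nonneg (a * p + b * q - s), hs, hs_sq, hab]

lemma cs_eq_aux (a b p q s : ℝ) (hs : 0 < s) (hs_sq : s ^ 2 = p ^ 2 + q ^ 2)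
    (hab : a ^ 2 + b ^ 2 = 1) (heq : a * p + b * q = s) :
    a * s = p ∧ b * s = q := by
  have h0 : (a * q - b * p) ^ 2 = 0 := by
    linear_combination (p ^ 2 + q ^ 2) * hab - hs_sq - (a * p + b * q + s) * heq
  have hcross : a * q - b * p = 0 := by
    exact pow_eq_zero_iff (n := 2) (by norm_num) |>.mp h0
  constructor
  · have h1 : a * s * s = p * s := by
      linear_combination a * hs_sq + p * heq + q * hcross
    exact mul_right_cancel₀ hs.ne' h1
  · have h1 : b * s * s = q * s := by
      linear_combination b * hs_sq + q * heq - p * hcross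
    exact mul_right_cancel₀ hs.ne' h1

/-- if H is not symmetric trace-free, the normalized closed-form matrix
R* = [[ϑ,ϝ],[−ϝ,ϑ]] is the unique minimizer of |R − H|_F over SO(2). -/
theorem nearest_rotation (H : Matrix (Fin 2) (Fin 2) ℝ)
    (hH : ¬(H 0 0 + H 1 1 = 0 ∧ H 0 1 - H 1 0 = 0)) :
    let s : ℝ := Real.sqrt ((H 0 0 + H 1 1) ^ 2 + (H 0 1 - H 1 0) ^ 2)
    let ϑ : ℝ := (H 0 0 + H 1 1) / s
    let ϝ : ℝ := (H 0 1 - H 1 0) / s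
    let Rstar : Matrix (Fin 2) (Fin 2) ℝ := !![ϑ, ϝ; -ϝ, ϑ]
    (Rstarᵀ * Rstar = 1 ∧ Rstar.det = 1) ∧
      ∀ R : Matrix (Fin 2) (Fin 2) ℝ, Rᵀ * R = 1 → R.det = 1 →
        frobNorm (Rstar - H) ≤ frobNorm (R - H) ∧
        (frobNorm (R - H) = frobNorm (Rstar - H) → R = Rstar) := by
  intro s ϑ ϝ Rstar
  have hpq : (H 0 0 + H 1 1) ^ 2 + (H 0 1 - H 1 0) ^ 2 > 0 := by
    rcases not_and_or.mp hH with h | h <;> positivity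
  have hs_pos : s > 0 := Real.sqrt_pos.mpr hpq
  have hs_sq : s ^ 2 = (H 0 0 + H 1 1) ^ 2 + (H 0 1 - H 1 0) ^ 2 := Real.sq_sqrt hpq.le
  have hϑdef : ϑ = (H 0 0 + H 1 1) / s := rfl
  have hϝdef : ϝ = (H 0 1 - H 1 0) / s := rfl
  have hRdef : Rstar = !![ϑ, ϝ; -ϝ, ϑ] := rfl
  clear_value Rstar ϝ ϑ s
  have hϑs : ϑ * s = H 0 0 + H 1 1 := by
    rw [hϑdef]; exact div_mul_cancel₀ _ hs_pos.ne'
  have hϝs : ϝ * s = H 0 1 - H 1 0 := by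
    rw [hϝdef]; exact div_mul_cancel₀ _ hs_pos.ne'
  have hunit : ϑ ^ 2 + ϝ ^ 2 = 1 := by
    have h1 : (ϑ ^ 2 + ϝ ^ 2) * s ^ 2 = 1 * s ^ 2 := by
      linear_combination (ϑ * s + H 0 0 + H 1 1) * hϑs + (ϝ * s + H 0 1 - H 1 0) * hϝs - hs_sq
    exact mul_right_cancel₀ (by positivity) h1
  have hdot : ϑ * (H 0 0 + H 1 1) + ϝ * (H 0 1 - H 1 0) = s := by
    have h1 : (ϑ * (H 0 0 + H 1 1) + ϝ * (H 0 1 - H 1 0)) * s = s * s := by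
      linear_combination (H 0 0 + H 1 1) * hϑs + (H 0 1 - H 1 0) * hϝs - hs_sq + s * s
    exact mul_right_cancel₀ hs_pos.ne' (by linarith [h1])
  have hRs00 : Rstar 0 0 = ϑ := by rw [hRdef]; simp
  have hRs01 : Rstar 0 1 = ϝ := by rw [hRdef]; simp
  have hRs10 : Rstar 1 0 = -ϝ := by rw [hRdef]; simp
  have hRs11 : Rstar 1 1 = ϑ := by rw [hRdef]; simp
  refine ⟨by rw [hRdef]; exact so2_aux ϑ ϝ hunit, ?_⟩
  intro R hR hdet
  have e1 : R 0 0 ^ 2 + R 1 0 ^ 2 = 1 := by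
    have h := congrFun (congrFun hR 0) 0
    simp [Matrix.mul_apply, Fin.sum_univ_succ, Matrix.one_apply] at h
    linear_combination h
  have e2 : R 0 1 ^ 2 + R 1 1 ^ 2 = 1 := by
    have h := congrFun (congrFun hR 1) 1
    simp [Matrix.mul_apply, Fin.sum_univ_succ, Matrix.one_apply] at h
    linear_combination h
  have e3 : R 0 0 * R 0 1 + R 1 0 * R 1 1 = 0 := by
    have h := congrFun (congrFun hR 0) 1
    simp [Matrix.mul_apply, Fin.sum_univ_succ, Matrix.one_apply] at h
    linear_combination h
  have e4 : R 0 0 * R 1 1 - R 0 1 * R 1 0 = 1 := by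
    have h := hdet
    rw [Matrix.det_fin_two] at h
    linear_combination h
  have hda : R 1 1 = R 0 0 := by
    linear_combination (-(R 1 1)) * e1 + R 0 0 * e4 + R 1 0 * e3
  have hcb : R 1 0 = -(R 0 1) := by
    linear_combination (- R 1 0) * e2 + R 1 1 * e3 + (- R 0 1) * e4
  have hab : R 0 0 ^ 2 + R 0 1 ^ 2 = 1 := by
    linear_combination e1 + (R 0 1 - R 1 0) * hcb
  have tR : Matrix.trace ((R - H)ᵀ * (R - H)) =
      2 + (H 0 0 ^ 2 + H 0 1 ^ 2 + H 1 0 ^ 2 + H 1 1 ^ 2)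
        - 2 * (R 0 0 * (H 0 0 + H 1 1) + R 0 1 * (H 0 1 - H 1 0)) := by
    rw [frob_sq]
    simp only [Matrix.sub_apply]
    linear_combination 2 * hab + (2 * R 1 1 - 2 * H 1 1 + 2 * R 0 0 - 2 * H 1 1) * 0 +
      (R 1 1 + R 0 0 - 2 * H 1 1) * hda + (R 1 0 - R 0 1 - 2 * H 1 0 + 2 * R 0 1) * 0 +
      (R 1 0 - 2 * H 1 0 - R 0 1) * hcb
  have tRs : Matrix.trace ((Rstar - H)ᵀ * (Rstar - H)) =
      2 + (H 0 0 ^ 2 + H 0 1 ^ 2 + H 1 0 ^ 2 + H 1 1 ^ 2) - 2 * s := by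
    rw [frob_sq]
    simp only [Matrix.sub_apply, hRs00, hRs01, hRs10, hRs11]
    linear_combination 2 * hunit - 2 * hdot
  have hCS : R 0 0 * (H 0 0 + H 1 1) + R 0 1 * (H 0 1 - H 1 0) ≤ s :=
    cs_aux _ _ _ _ _ hs_pos hs_sq hab
  have hle : Matrix.trace ((Rstar - H)ᵀ * (Rstar - H)) ≤
      Matrix.trace ((R - H)ᵀ * (R - H)) := by
    rw [tR, tRs]; linarith
  constructor
  · simp only [frobNorm]
    exact Real.sqrt_le_sqrt hle
  · intro heq
    have hnn : (0:ℝ) ≤ Matrix.trace ((R - H)ᵀ * (R - H)) := by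
      rw [frob_sq]; positivity
    have hnn' : (0:ℝ) ≤ Matrix.trace ((Rstar - H)ᵀ * (Rstar - H)) := by
      rw [frob_sq]; positivity
    have htr_eq : Matrix.trace ((R - H)ᵀ * (R - H)) =
        Matrix.trace ((Rstar - H)ᵀ * (Rstar - H)) := by
      have h2 := congrArg (fun x : ℝ => x ^ 2) heq
      simp only [frobNorm] at h2
      rwa [Real.sq_sqrt hnn, Real.sq_sqrt hnn'] at h2
    have hdot_eq : R 0 0 * (H 0 0 + H 1 1) + R 0 1 * (H 0 1 - H 1 0) = s := by
      rw [tR, tRs] at htr_eq; linarith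
    obtain ⟨hA, hB⟩ := cs_eq_aux _ _ _ _ _ hs_pos hs_sq hab hdot_eq
    have haϑ : R 0 0 = ϑ := by
      rw [hϑdef, eq_div_iff hs_pos.ne']; exact hA
    have hbϝ : R 0 1 = ϝ := by
      rw [hϝdef, eq_div_iff hs_pos.ne']; exact hB
    ext i j
    fin_cases i <;> fin_cases j <;>
      simp only [Fin.zero_eta, Fin.mk_one, hRs00, hRs01, hRs10, hRs11] <;>
      first
        | exact haϑ
        | exact hbϝ
        | (rw [hcb, hbϝ])
        | (rw [hda, haϑ])
end
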